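/- With B of full row rank and F invertible, if the exact commutation relation Bᵀ X = F Bᵀ holds for some invertible matrix X, then the Schur complement inverse satisfies (B F⁻¹ Bᵀ)⁻¹ = X (B Bᵀ)⁻¹; i.e., the BFBT formula S⁻¹ = (BBᵀ)⁻¹ B F Bᵀ (BBᵀ)⁻¹ is exact when X = (BBᵀ)⁻¹BFBᵀ commutes exactly. -/
import Mathlib


open Matrix

lemma isUnit_det_of_rank_eq' {m : ℕ} (A : Matrix (Fin m) (Fin m) ℝ) (h : A.rank = m) :
    IsUnit A.det := by
  have hsurj : Function.Surjective A.mulVecLin := by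
    rw [← LinearMap.range_eq_top]
    apply Submodule.eq_top_of_finrank_eq
    rw [Matrix.rank] at h
    simp [h]
  have hinj : Function.Injective A.mulVecLin :=
    (LinearMap.injective_iff_surjective).mpr hsurj
  rw [isUnit_iff_ne_zero]
  intro hd
  obtain ⟨v, hv0, hv⟩ := (Matrix.exists_mulVec_eq_zero_iff).mpr hd
  exact hv0 (hinj (by simpa using hv))

/-- if the commutation relation Bᵀ X = F Bᵀ holds exactly, the BFBT
formula for the inverse Schur complement is exact. -/
theorem bfbt_exact_of_exact_commutator {m n : ℕ}
    (B : Matrix (Fin m) (Fin n) ℝ) (hr : B.rank = m)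
    (F : Matrix (Fin n) (Fin n) ℝ) (hF : IsUnit F.det)
    (X : Matrix (Fin m) (Fin m) ℝ) (hX : IsUnit X.det)
    (hc : Bᵀ * X = F * Bᵀ) :
    IsUnit (B * F⁻¹ * Bᵀ).det ∧
      (B * F⁻¹ * Bᵀ)⁻¹ = X * (B * Bᵀ)⁻¹ ∧
      X = (B * Bᵀ)⁻¹ * B * F * Bᵀ ∧
      (B * F⁻¹ * Bᵀ)⁻¹ = (B * Bᵀ)⁻¹ * B * F * Bᵀ * (B * Bᵀ)⁻¹ := by
  have hBB : IsUnit (B * Bᵀ).det := by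
    apply isUnit_det_of_rank_eq'
    rw [Matrix.rank_self_mul_transpose, hr]
  -- F⁻¹ Bᵀ = Bᵀ X⁻¹
  have h1 : F⁻¹ * Bᵀ = Bᵀ * X⁻¹ := by
    have : F⁻¹ * (Bᵀ * X) = Bᵀ := by
      rw [hc, ← Matrix.mul_assoc, Matrix.nonsing_inv_mul F hF, Matrix.one_mul]
    calc F⁻¹ * Bᵀ = F⁻¹ * (Bᵀ * X) * X⁻¹ := by
          rw [Matrix.mul_assoc F⁻¹, Matrix.mul_assoc Bᵀ,
            Matrix.mul_nonsing_inv X hX, Matrix.mul_one]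
      _ = Bᵀ * X⁻¹ := by rw [this]
  have hS : B * F⁻¹ * Bᵀ = B * Bᵀ * X⁻¹ := by
    rw [Matrix.mul_assoc, h1, ← Matrix.mul_assoc]
  have hright : (B * F⁻¹ * Bᵀ) * (X * (B * Bᵀ)⁻¹) = 1 := by
    rw [hS, Matrix.mul_assoc (B * Bᵀ), ← Matrix.mul_assoc X⁻¹,
      Matrix.nonsing_inv_mul X hX, Matrix.one_mul,
      Matrix.mul_nonsing_inv _ hBB]
  have hu : IsUnit (B * F⁻¹ * Bᵀ).det := Matrix.isUnit_det_of_right_inverse hright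
  have hinv : (B * F⁻¹ * Bᵀ)⁻¹ = X * (B * Bᵀ)⁻¹ :=
    Matrix.inv_eq_right_inv hright
  have hXeq : X = (B * Bᵀ)⁻¹ * B * F * Bᵀ := by
    have h2 : B * Bᵀ * X = B * F * Bᵀ := by
      rw [Matrix.mul_assoc, hc, ← Matrix.mul_assoc]
    calc X = (B * Bᵀ)⁻¹ * (B * Bᵀ * X) := by
          rw [← Matrix.mul_assoc, Matrix.nonsing_inv_mul _ hBB, Matrix.one_mul]
      _ = (B * Bᵀ)⁻¹ * B * F * Bᵀ := by
          rw [h2, ← Matrix.mul_assoc, ← Matrix.mul_assoc]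
  refine ⟨hu, hinv, hXeq, ?_⟩
  rw [hinv, hXeq]
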